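/- arXiv:2307.08872 — 2 statements merged into one kernel-verified Lean document; each statement's English description precedes it below -/
import Mathlib

section
/- Let A be a commutative local ring whose residue field A/m_A has more than 3 elements. Then, for the action of A^× on the additive group (A, +) by a · x = a²x, one has H_0(A^×, A) = 0; that is, A is generated as an additive group by the elements a²x − x with a ∈ A^×, x ∈ A. -/
/-- Let `A` be a commutative local ring whose residue field has more
than 3 elements.  Then, for the action of `Aˣ` on the additive group `(A, +)` by
`a · x = a² x`, one has `H₀(Aˣ, A) = 0`; that is, `A` is generated as an additive group
by the elements `a² x − x` with `a ∈ Aˣ`, `x ∈ A`. -/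
theorem statement_1 (A : Type*) [CommRing A] [IsLocalRing A]
    (h : 3 < Nat.card (IsLocalRing.ResidueField A) ∨
      Infinite (IsLocalRing.ResidueField A)) :
    AddSubgroup.closure
      {y : A | ∃ (a : Aˣ) (x : A), y = (a : A) ^ 2 * x - x} = ⊤ := by
  classical
  set k := IsLocalRing.ResidueField A
  -- find t in k avoiding {0, 1, -1}
  obtain ⟨t, ht⟩ : ∃ t : k, t ∉ ({0, 1, -1} : Set k) := by
    have hfin : ({0, 1, -1} : Set k).Finite := Set.toFinite _
    rcases h with h | h
    · by_contra hc
      push_neg at hc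
      have : (Set.univ : Set k) ⊆ {0, 1, -1} := fun x _ => hc x
      have hle : Nat.card k ≤ 3 := by
        have := Nat.card_mono hfin this
        simpa [Nat.card_eq_fintype_card] using
          this.trans (by
            have : Nat.card ({0, 1, -1} : Set k) ≤ 3 := by
              have : ({0, 1, -1} : Set k) = ↑({0, 1, -1} : Finset k) := by simp
              rw [this, Nat.card_coe_set_eq, Set.ncard_coe_finset]
              exact (Finset.card_insert_le _ _).trans
                (by simpa using Nat.succ_le_succ (Finset.card_insert_le (1 : k) ({-1} : Finset k)))
            exact this)
      omega
    · obtain ⟨t, ht⟩ := (Set.Finite.infinite_compl hfin).nonempty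
      exact ⟨t, ht⟩
  simp only [Set.mem_insert_iff, Set.mem_singleton_iff, not_or] at ht
  obtain ⟨ht0, ht1, htm1⟩ := ht
  -- lift t to a unit a of A
  obtain ⟨a, ha⟩ := IsLocalRing.residue_surjective (R := A) t
  have haU : IsUnit a := (IsLocalRing.residue_ne_zero_iff_isUnit a).1 (by rw [ha]; exact ht0)
  have hU : IsUnit (a ^ 2 - 1) := by
    refine (IsLocalRing.residue_ne_zero_iff_isUnit _).1 ?_
    have : IsLocalRing.residue A (a ^ 2 - 1) = t ^ 2 - 1 := by
      simp [map_sub, map_pow, ha]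
    rw [this]
    intro hz
    have : (t - 1) * (t + 1) = 0 := by linear_combination hz
    rcases mul_eq_zero.1 this with h' | h'
    · exact ht1 (sub_eq_zero.1 h')
    · exact htm1 (by have := eq_neg_of_add_eq_zero_left h'; simpa using this)
  -- every y is of the form a²x - x
  rw [eq_top_iff]
  intro y _
  apply AddSubgroup.subset_closure
  obtain ⟨u, hu⟩ := hU
  refine ⟨haU.unit, (↑u⁻¹ : A) * y, ?_⟩
  have : ((haU.unit : A)) = a := rfl
  rw [this]
  have : a ^ 2 * ((↑u⁻¹ : A) * y) - (↑u⁻¹ : A) * y = (a ^ 2 - 1) * ((↑u⁻¹ : A) * y) := by ring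
  rw [this, ← hu, ← mul_assoc, Units.mul_inv, one_mul]
end

section
/- Let p be a prime number and A_p = ℤ[1/p]. Then H_1(B(A_p), ℤ) ≅ H_1(T(A_p), ℤ) ⊕ ℤ/(p² − 1). -/
set_option linter.unusedSectionVars false

namespace GroupHomology

noncomputable section

variable {G G' : Type*} [Group G] [Group G'] {M : Type*} [AddCommGroup M]

/-- Bar complex chains: `C_n(G, M) = ℤ[Gⁿ] ⊗ M`. -/
abbrev Ch (G : Type*) [Group G] (M : Type*) [AddCommGroup M] (n : ℕ) : Type _ :=
  (Fin n → G) →₀ M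

/-- The `i`-th "inner face" of an inhomogeneous tuple, multiplying the entries
`i` and `i+1`. -/
def mulAt {n : ℕ} (g : Fin (n + 1) → G) (i : Fin n) : Fin n → G := fun j =>
  if j = i then g i.castSucc * g i.succ
  else if (j : ℕ) < (i : ℕ) then g j.castSucc else g j.succ

/-- The multiplicative group structure on `AddAut M` (composition), as in older Mathlib. -/
instance addAutMulGroup (M : Type*) [Add M] : Group (AddAut M) where
  mul g h := AddEquiv.trans h g
  one := AddEquiv.refl _
  inv := AddEquiv.symm
  mul_assoc _ _ _ := rfl
  one_mul _ := rfl
  mul_one _ := rfl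
  inv_mul_cancel := AddEquiv.self_trans_symm

variable (ρ : G →* AddAut M)

/-- The bar differential applied to the generator `[g₁|...|g_{n+1}] ⊗ m`. -/
def dFun (n : ℕ) (g : Fin (n + 1) → G) (m : M) : Ch G M n :=
  Finsupp.single (Fin.tail g) (ρ (g 0)⁻¹ m)
    + (Finset.univ.sum fun i : Fin n =>
        ((-1 : ℤ) ^ ((i : ℕ) + 1)) • Finsupp.single (mulAt g i) m)
    + ((-1 : ℤ) ^ (n + 1)) • Finsupp.single (Fin.init g) m

@[simp] lemma dFun_zero (n : ℕ) (g : Fin (n + 1) → G) :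
    dFun ρ n g 0 = 0 := by
  simp [dFun]

lemma dFun_add (n : ℕ) (g : Fin (n + 1) → G) (m m' : M) :
    dFun ρ n g (m + m') = dFun ρ n g m + dFun ρ n g m' := by
  simp only [dFun, map_add, Finsupp.single_add, smul_add, Finset.sum_add_distrib]
  abel

/-- The bar differential `d : C_{n+1} → C_n` for inhomogeneous chains. -/
def d (n : ℕ) : Ch G M (n + 1) →+ Ch G M n :=
  Finsupp.liftAddHom fun g => AddMonoidHom.mk' (dFun ρ n g) (dFun_add ρ n g)

@[simp] lemma d_single (n : ℕ) (g : Fin (n + 1) → G) (m : M) :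
    d ρ n (Finsupp.single g m) = dFun ρ n g m := by
  simp [d, Finsupp.liftAddHom_apply_single, Finsupp.sum_single_index]

/-- Cycles. -/
def Zc : (n : ℕ) → AddSubgroup (Ch G M n)
  | 0 => ⊤
  | n + 1 => (d ρ n).ker

/-- Boundaries, as a subgroup of cycles. -/
def Bc (n : ℕ) : AddSubgroup ↥(Zc ρ n) :=
  ((d ρ n).range).addSubgroupOf (Zc ρ n)

/-- The `n`-th group homology of `G` with coefficients in `M`, the action of `G`
being given by `ρ : G →* AddAut M`. -/
def H (n : ℕ) : Type _ := ↥(Zc ρ n) ⧸ Bc ρ n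

instance (n : ℕ) : AddCommGroup (H ρ n) :=
  QuotientAddGroup.Quotient.addCommGroup _

/-- The trivial action of `G` on `M`. -/
def triv (G : Type*) [Group G] (M : Type*) [AddCommGroup M] : G →* AddAut M := 1

@[simp] lemma triv_apply (g : G) (m : M) : (triv G M g) m = m := rfl

@[simp] lemma triv_apply_inv (g : G) (m : M) : (triv G M g)⁻¹ m = m := by
  rfl

/-- The chain map induced by a group homomorphism (trivial coefficients). -/
def Cmap (f : G →* G') (n : ℕ) : Ch G M n →+ Ch G' M n :=
  Finsupp.mapDomain.addMonoidHom fun g => f ∘ g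

@[simp] lemma Cmap_single (f : G →* G') (n : ℕ) (g : Fin n → G) (m : M) :
    Cmap f n (Finsupp.single g m) = Finsupp.single (f ∘ g) m :=
  Finsupp.mapDomain_single

lemma comp_mulAt (f : G →* G') {n : ℕ} (g : Fin (n + 1) → G) (i : Fin n) :
    f ∘ mulAt g i = mulAt (f ∘ g) i := by
  funext j
  simp only [mulAt, Function.comp]
  split_ifs <;> simp [map_mul]

lemma Cmap_d (f : G →* G') (n : ℕ) :
    (Cmap (M := M) f n).comp (d (triv G M) n)
      = (d (triv G' M) n).comp (Cmap f (n + 1)) := by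
  apply Finsupp.addHom_ext
  intro g m
  simp only [AddMonoidHom.comp_apply, Cmap_single, d_single, dFun, triv_apply_inv]
  rw [map_add, map_add, map_sum]
  simp only [map_zsmul, Cmap_single, comp_mulAt]
  rfl

lemma Cmap_mem_Zc (f : G →* G') {n : ℕ} {x : Ch G M n}
    (hx : x ∈ Zc (triv G M) n) : Cmap f n x ∈ Zc (triv G' M) n := by
  cases n with
  | zero => trivial
  | succ n =>
      have := congrArg (fun φ => φ x) (Cmap_d (M := M) f n)
      simp only [AddMonoidHom.comp_apply] at this
      have hx' : d (triv G M) n x = 0 := hx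
      simp only [Zc, AddMonoidHom.mem_ker] at *
      rw [← this, hx', map_zero]

/-- The map on cycles induced by a group homomorphism. -/
def Zmap (f : G →* G') (n : ℕ) : ↥(Zc (triv G M) n) →+ ↥(Zc (triv G' M) n) :=
  AddMonoidHom.codRestrict ((Cmap f n).comp (Zc (triv G M) n).subtype) _
    fun x => Cmap_mem_Zc f x.2

/-- The map on group homology induced by a group homomorphism
(trivial coefficients). -/
def Hmap (f : G →* G') (n : ℕ) : H (triv G M) n →+ H (triv G' M) n :=
  QuotientAddGroup.map _ _ (Zmap f n) (by
    rintro ⟨x, hx⟩ hmem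
    rw [Bc, AddSubgroup.mem_addSubgroupOf] at hmem
    obtain ⟨y, hy⟩ := hmem
    rw [AddSubgroup.mem_comap, Bc, AddSubgroup.mem_addSubgroupOf]
    refine ⟨Cmap f (n + 1) y, ?_⟩
    have := congrArg (fun φ => φ y) (Cmap_d (M := M) f n)
    simp only [AddMonoidHom.comp_apply] at this
    simp only [Zmap, AddMonoidHom.codRestrict_apply, AddMonoidHom.comp_apply,
      AddSubgroup.coe_subtype]
    rw [← this, hy])

section Classes

variable (k : Type*) [AddCommGroup k]

lemma cyc1_mem (g : G) (m : k) :
    Finsupp.single (fun _ : Fin 1 => g) m ∈ Zc (triv G k) 1 := by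
  show _ ∈ (d (triv G k) 0).ker
  rw [AddMonoidHom.mem_ker, d_single]
  have h : Fin.tail (fun _ : Fin 1 => g) = Fin.init (fun _ : Fin 1 => g) := by
    funext i; exact i.elim0
  simp [dFun, h]

/-- The homology class of a group element in degree 1. -/
def hcl (g : G) : H (triv G ℤ) 1 :=
  QuotientAddGroup.mk ⟨Finsupp.single (fun _ : Fin 1 => g) (1 : ℤ), cyc1_mem ℤ g 1⟩

lemma pair_tail (a b : G) : Fin.tail ![a, b] = fun _ : Fin 1 => b := by
  funext i
  fin_cases i
  rfl

lemma pair_init (a b : G) : Fin.init ![a, b] = fun _ : Fin 1 => a := by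
  funext i
  fin_cases i
  rfl

lemma pair_mulAt (a b : G) (i : Fin 1) :
    mulAt ![a, b] i = fun _ : Fin 1 => a * b := by
  have hi : i = 0 := Subsingleton.elim _ _
  subst hi
  funext j
  have hj : j = 0 := Subsingleton.elim _ _
  subst hj
  simp [mulAt]

lemma cyc2_mem {a b : G} (hab : a * b = b * a) (m : k) :
    Finsupp.single ![a, b] m - Finsupp.single ![b, a] m ∈ Zc (triv G k) 2 := by
  show _ ∈ (d (triv G k) 1).ker
  rw [AddMonoidHom.mem_ker, map_sub, d_single, d_single]
  simp only [dFun, triv_apply, triv_apply_inv, Fin.sum_univ_one, pair_tail, pair_init, pair_mulAt]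
  rw [hab]
  abel

end Classes

section Relative

variable (k : Type*) [AddCommGroup k]

/-- The image of the chains of a subgroup inside the chains of the group. -/
def relSet (Hs : Subgroup G) (n : ℕ) : AddSubgroup (Ch G k n) :=
  AddSubgroup.closure
    {x | ∃ (g : Fin n → G) (m : k), (∀ i, g i ∈ Hs) ∧ x = Finsupp.single g m}

lemma d_relSet (Hs : Subgroup G) (n : ℕ) :
    relSet k Hs (n + 1) ≤ (relSet k Hs n).comap (d (triv G k) n) := by
  rw [relSet, AddSubgroup.closure_le]
  rintro x ⟨g, m, hg, rfl⟩
  rw [SetLike.mem_coe, AddSubgroup.mem_comap, d_single]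
  have key : ∀ (t : Fin n → G) (c : k), (∀ i, t i ∈ Hs) →
      Finsupp.single t c ∈ relSet k Hs n := fun t c ht =>
    AddSubgroup.subset_closure
      (show ∃ (t' : Fin n → G) (c' : k), (∀ i, t' i ∈ Hs) ∧
          Finsupp.single t c = Finsupp.single t' c' from ⟨t, c, ht, rfl⟩)
  refine add_mem (add_mem ?_ ?_) ?_
  · exact key _ _ fun i => hg i.succ
  · refine AddSubgroup.sum_mem _ fun i _ => AddSubgroup.zsmul_mem _ ?_ _
    refine key _ _ fun j => ?_
    simp only [mulAt]
    split_ifs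
    · exact Hs.mul_mem (hg _) (hg _)
    · exact hg _
    · exact hg _
  · exact AddSubgroup.zsmul_mem _ (key _ _ fun i => hg i.castSucc) _

/-- Relative chains: the quotient of the chains of `G` by the chains of the
subgroup `Hs`. -/
def RelCh (Hs : Subgroup G) (n : ℕ) : Type _ := Ch G k n ⧸ relSet k Hs n

instance (Hs : Subgroup G) (n : ℕ) : AddCommGroup (RelCh k Hs n) :=
  QuotientAddGroup.Quotient.addCommGroup _

/-- The differential on relative chains. -/
def dRel (Hs : Subgroup G) (n : ℕ) : RelCh k Hs (n + 1) →+ RelCh k Hs n :=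
  QuotientAddGroup.map _ _ (d (triv G k) n) (d_relSet k Hs n)

/-- Relative cycles. -/
def ZcRel (Hs : Subgroup G) : (n : ℕ) → AddSubgroup (RelCh k Hs n)
  | 0 => ⊤
  | n + 1 => (dRel k Hs n).ker

/-- The relative homology `H_n(G, Hs; k)` of a group `G` relative to a subgroup
`Hs`, with trivial coefficients in `k`:  the homology of the quotient of the bar
complex of `G` with coefficients in `k` by the image of the bar complex of `Hs`. -/
def RelH (Hs : Subgroup G) (n : ℕ) : Type _ :=
  ↥(ZcRel k Hs n) ⧸ ((dRel k Hs n).range).addSubgroupOf (ZcRel k Hs n)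

instance (Hs : Subgroup G) (n : ℕ) : AddCommGroup (RelH k Hs n) :=
  QuotientAddGroup.Quotient.addCommGroup _

end Relative

end

end GroupHomology

namespace SL2Aux

noncomputable section

variable (A : Type*) [CommRing A]

/-- `SL₂(A)`. -/
abbrev SL2 := Matrix.SpecialLinearGroup (Fin 2) A

/-- The subgroup of diagonal matrices in `SL₂(A)`. -/
def Tsub : Subgroup (SL2 A) where
  carrier := {g | (g : Matrix (Fin 2) (Fin 2) A) 0 1 = 0 ∧
    (g : Matrix (Fin 2) (Fin 2) A) 1 0 = 0}
  one_mem' := by simp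
  mul_mem' := by
    rintro a b ⟨ha1, ha2⟩ ⟨hb1, hb2⟩
    constructor <;>
      simp [Matrix.SpecialLinearGroup.coe_mul, Matrix.mul_apply, Fin.sum_univ_two,
        ha1, ha2, hb1, hb2]
  inv_mem' := by
    rintro a ⟨h1, h2⟩
    constructor <;>
      simp [Matrix.SpecialLinearGroup.coe_inv, Matrix.adjugate_fin_two, h1, h2]

/-- The subgroup of upper triangular matrices in `SL₂(A)`. -/
def Bsub : Subgroup (SL2 A) where
  carrier := {g | (g : Matrix (Fin 2) (Fin 2) A) 1 0 = 0}
  one_mem' := by simp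
  mul_mem' := by
    intro a b ha hb
    simp only [Set.mem_setOf_eq] at *
    simp [Matrix.SpecialLinearGroup.coe_mul, Matrix.mul_apply, Fin.sum_univ_two, ha, hb]
  inv_mem' := by
    intro a ha
    simp only [Set.mem_setOf_eq] at *
    simp [Matrix.SpecialLinearGroup.coe_inv, Matrix.adjugate_fin_two, ha]

/-- The subgroup of monomial matrices in `SL₂(A)`. -/
def SMsub : Subgroup (SL2 A) where
  carrier := {g | ((g : Matrix (Fin 2) (Fin 2) A) 0 1 = 0 ∧
      (g : Matrix (Fin 2) (Fin 2) A) 1 0 = 0) ∨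
    ((g : Matrix (Fin 2) (Fin 2) A) 0 0 = 0 ∧
      (g : Matrix (Fin 2) (Fin 2) A) 1 1 = 0)}
  one_mem' := by left; simp
  mul_mem' := by
    rintro a b (⟨ha1, ha2⟩ | ⟨ha1, ha2⟩) (⟨hb1, hb2⟩ | ⟨hb1, hb2⟩)
    · left
      constructor <;>
        simp [Matrix.SpecialLinearGroup.coe_mul, Matrix.mul_apply, Fin.sum_univ_two,
          ha1, ha2, hb1, hb2]
    · right
      constructor <;>
        simp [Matrix.SpecialLinearGroup.coe_mul, Matrix.mul_apply, Fin.sum_univ_two,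
          ha1, ha2, hb1, hb2]
    · right
      constructor <;>
        simp [Matrix.SpecialLinearGroup.coe_mul, Matrix.mul_apply, Fin.sum_univ_two,
          ha1, ha2, hb1, hb2]
    · left
      constructor <;>
        simp [Matrix.SpecialLinearGroup.coe_mul, Matrix.mul_apply, Fin.sum_univ_two,
          ha1, ha2, hb1, hb2]
  inv_mem' := by
    rintro a (⟨h1, h2⟩ | ⟨h1, h2⟩)
    · left
      constructor <;>
        simp [Matrix.SpecialLinearGroup.coe_inv, Matrix.adjugate_fin_two, h1, h2]
    · right
      constructor <;>
        simp [Matrix.SpecialLinearGroup.coe_inv, Matrix.adjugate_fin_two, h1, h2]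

lemma T_le_B : Tsub A ≤ Bsub A := fun _ h => h.2

lemma T_le_SM : Tsub A ≤ SMsub A := fun _ h => Or.inl h

variable {A}

/-- The diagonal matrix `diag(a, a⁻¹)` in `SL₂(A)`. -/
def dMat (a : Aˣ) : SL2 A :=
  ⟨!![(a : A), 0; 0, ((a⁻¹ : Aˣ) : A)], by
    simp [Matrix.det_fin_two_of]⟩

lemma dMat_mem_T (a : Aˣ) : dMat a ∈ Tsub A := by
  constructor <;> simp [dMat]

lemma dMat_mem_SM (a : Aˣ) : dMat a ∈ SMsub A :=
  T_le_SM A (dMat_mem_T a)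

lemma dMat_mul (a b : Aˣ) : dMat (a * b) = dMat a * dMat b := by
  ext i j
  rw [Matrix.SpecialLinearGroup.coe_mul]
  fin_cases i <;> fin_cases j <;>
    simp [dMat, Matrix.SpecialLinearGroup.coe_mul, Matrix.mul_apply, Fin.sum_univ_two,
      mul_comm]

/-- The matrix `E(x) = [[x, 1], [-1, 0]]` in `SL₂(A)`. -/
def Emat (x : A) : SL2 A :=
  ⟨!![x, 1; -1, 0], by simp [Matrix.det_fin_two_of]⟩

end

end SL2Aux

/-- `ℤ[1/p]`, the subring of `ℚ` generated by `1/p`. -/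
def Ap (p : ℕ) : Subring ℚ := Subring.closure {((p : ℚ))⁻¹}


namespace Statement8Aux
open GroupHomology

noncomputable section

variable {G : Type*} [Group G]

lemma fin0_eq (f g : Fin 0 → G) : f = g := funext fun i => i.elim0

lemma d_zero_eq : d (triv G ℤ) 0 = 0 := by
  apply Finsupp.addHom_ext
  intro g m
  rw [AddMonoidHom.zero_apply, d_single]
  simp only [dFun, Finset.univ_eq_empty, Finset.sum_empty, pow_one, triv_apply,
    zero_add, add_zero]
  rw [fin0_eq (Fin.tail g) (Fin.init g)]
  simp

lemma mem_Zc_one (x : Ch G ℤ 1) : x ∈ Zc (triv G ℤ) 1 := by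
  show x ∈ (d (triv G ℤ) 0).ker
  rw [AddMonoidHom.mem_ker, d_zero_eq, AddMonoidHom.zero_apply]

/-- degree-1 chains to the abelianization -/
def toAbHom : Ch G ℤ 1 →+ Additive (Abelianization G) :=
  Finsupp.liftAddHom fun g => zmultiplesHom _ (Additive.ofMul (Abelianization.of (g 0)))

@[simp] lemma toAbHom_single (g : Fin 1 → G) (m : ℤ) :
    toAbHom (Finsupp.single g m) = m • Additive.ofMul (Abelianization.of (g 0)) := by
  simp [toAbHom, Finsupp.liftAddHom_apply_single]

lemma eq_const (g : Fin 1 → G) : g = fun _ => g 0 := by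
  funext i
  have : i = 0 := Subsingleton.elim _ _
  rw [this]

lemma toAbHom_d (y : Ch G ℤ 2) : toAbHom (d (triv G ℤ) 1 y) = 0 := by
  induction y using Finsupp.induction_linear with
  | zero => simp
  | add a b ha hb => rw [map_add, map_add, ha, hb, add_zero]
  | single g m =>
      rw [d_single]
      have s1 : ((-1 : ℤ)) ^ ((0 : Fin 1) : ℕ).succ = -1 := by norm_num
      have s2 : ((-1 : ℤ)) ^ (1 + 1) = 1 := by norm_num
      simp only [dFun, triv_apply, Fin.sum_univ_one, Nat.succ_eq_add_one] at *
      rw [s1, s2, one_smul, neg_one_smul]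
      rw [map_add, map_add, map_neg, toAbHom_single, toAbHom_single, toAbHom_single]
      have h1 : Fin.tail g 0 = g 1 := rfl
      have h2 : Fin.init g 0 = g 0 := rfl
      have h3 : mulAt g 0 0 = g 0 * g 1 := by
        simp only [mulAt, if_pos rfl]
        rfl
      rw [h1, h2, h3]
      have h4 : Additive.ofMul (Abelianization.of (g 0 * g 1))
          = Additive.ofMul (Abelianization.of (g 0))
            + Additive.ofMul (Abelianization.of (g 1)) := by
        rw [map_mul]
        rfl
      rw [h4, smul_add]
      abel

/-- The forward map on homology. -/
def Phi : H (triv G ℤ) 1 →+ Additive (Abelianization G) :=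
  QuotientAddGroup.lift _ (toAbHom.comp (Zc (triv G ℤ) 1).subtype) (by
    rintro ⟨x, hx⟩ hmem
    rw [Bc, AddSubgroup.mem_addSubgroupOf] at hmem
    obtain ⟨y, hy⟩ := hmem
    show toAbHom x = 0
    have hy' : d (triv G ℤ) 1 y = x := hy
    rw [← hy', toAbHom_d])

@[simp] lemma Phi_mk (z : ↥(Zc (triv G ℤ) 1)) :
    Phi (QuotientAddGroup.mk z) = toAbHom (z : Ch G ℤ 1) := rfl

lemma hcl_mul (g h : G) : hcl (g * h) = hcl g + hcl h := by
  show (QuotientAddGroup.mk _ : ↥(Zc (triv G ℤ) 1) ⧸ Bc (triv G ℤ) 1) = QuotientAddGroup.mk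
      (⟨Finsupp.single (fun _ : Fin 1 => g) (1 : ℤ), cyc1_mem ℤ g 1⟩
        + ⟨Finsupp.single (fun _ : Fin 1 => h) (1 : ℤ), cyc1_mem ℤ h 1⟩)
  rw [QuotientAddGroup.eq]
  rw [Bc, AddSubgroup.mem_addSubgroupOf]
  refine ⟨Finsupp.single ![g, h] (1 : ℤ), ?_⟩
  rw [d_single]
  show dFun (triv G ℤ) 1 ![g, h] 1
      = -Finsupp.single (fun _ : Fin 1 => g * h) (1 : ℤ)
        + (Finsupp.single (fun _ : Fin 1 => g) (1 : ℤ)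
          + Finsupp.single (fun _ : Fin 1 => h) (1 : ℤ))
  have s1 : ((-1 : ℤ)) ^ ((0 : Fin 1) : ℕ).succ = -1 := by norm_num
  have s2 : ((-1 : ℤ)) ^ (1 + 1) = 1 := by norm_num
  simp only [dFun, triv_apply, Fin.sum_univ_one, pair_tail, pair_init, pair_mulAt,
    Nat.succ_eq_add_one] at *
  rw [s1, s2, one_smul, neg_one_smul]
  abel

/-- The G-component of the reverse map. -/
def PsiF : G →* Multiplicative (H (triv G ℤ) 1) :=
  MonoidHom.mk' (fun g => Multiplicative.ofAdd (hcl g)) (by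
    intro a b
    show Multiplicative.ofAdd (hcl (a * b)) = _
    rw [hcl_mul]
    rfl)

/-- The reverse map. -/
def Psi : Additive (Abelianization G) →+ H (triv G ℤ) 1 :=
  AddMonoidHom.mk' (fun x => (Abelianization.lift PsiF x.toMul).toAdd) (by
    intro a b
    show ((Abelianization.lift PsiF) (a.toMul * b.toMul)).toAdd = _
    rw [map_mul]
    rfl)

@[simp] lemma Psi_of (g : G) :
    Psi (Additive.ofMul (Abelianization.of g)) = hcl g := by
  show ((Abelianization.lift PsiF) (Abelianization.of g)).toAdd = _
  rw [Abelianization.lift_apply_of]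
  rfl

lemma Psi_Phi (x : H (triv G ℤ) 1) : Psi (Phi x) = x := by
  induction x using QuotientAddGroup.induction_on with
  | H z =>
      have key : ∀ w : Ch G ℤ 1,
          Psi (toAbHom w) = QuotientAddGroup.mk ⟨w, mem_Zc_one w⟩ := by
        intro w
        induction w using Finsupp.induction_linear with
        | zero => rw [map_zero, map_zero]; rfl
        | add a b ha hb =>
            rw [map_add, map_add, ha, hb]
            rfl
        | single g m =>
            rw [toAbHom_single, map_zsmul, Psi_of, hcl]
            show QuotientAddGroup.mk (s := Bc (triv G ℤ) 1) (m • ⟨_, cyc1_mem ℤ (g 0) 1⟩) = _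
            congr 1
            refine Subtype.ext ?_
            rw [AddSubgroupClass.coe_zsmul]
            show m • Finsupp.single _ (1 : ℤ) = _
            rw [Finsupp.smul_single, smul_eq_mul, mul_one, ← eq_const]
      rw [Phi_mk, key]

lemma of_surj : Function.Surjective (fun g : G => Abelianization.of g) := fun x =>
  QuotientGroup.induction_on (x : G ⧸ commutator G) fun g => ⟨g, rfl⟩

lemma Phi_Psi (x : Additive (Abelianization G)) : Phi (Psi x) = x := by
  obtain ⟨g, hg⟩ := of_surj (Additive.toMul x)
  have hx : x = Additive.ofMul (Abelianization.of g) := by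
    have hg' : Abelianization.of g = Additive.toMul x := hg
    rw [hg']
    rfl
  rw [hx, Psi_of, hcl, Phi_mk]
  show toAbHom (Finsupp.single _ (1 : ℤ)) = _
  rw [toAbHom_single, one_smul]

/-- H₁ of a group with trivial ℤ coefficients is the abelianization. -/
def h1Iso (G : Type*) [Group G] :
    H (triv G ℤ) 1 ≃+ Additive (Abelianization G) where
  toFun := Phi
  invFun := Psi
  left_inv := Psi_Phi
  right_inv := Phi_Psi
  map_add' := Phi.map_add

section RingPart

variable (p : ℕ)

lemma mem_Ap (hp : 0 < p) {x : ℚ} (hx : x ∈ Ap p) :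
    ∃ (n : ℤ) (k : ℕ), x = (n : ℚ) / (p : ℚ) ^ k := by
  have hp0 : (p : ℚ) ≠ 0 := Nat.cast_ne_zero.mpr hp.ne'
  induction hx using Subring.closure_induction with
  | mem y hy =>
      rw [Set.mem_singleton_iff] at hy
      refine ⟨1, 1, by rw [hy, pow_one]; norm_num⟩
  | zero => exact ⟨0, 0, by simp⟩
  | one => exact ⟨1, 0, by simp⟩
  | add x y hx hy ihx ihy =>
      obtain ⟨n, k, rfl⟩ := ihx
      obtain ⟨m, l, rfl⟩ := ihy
      refine ⟨n * p ^ l + m * p ^ k, k + l, ?_⟩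
      push_cast
      rw [div_add_div _ _ (pow_ne_zero k hp0) (pow_ne_zero l hp0), ← pow_add]
      congr 1
      ring
  | neg x hx ihx =>
      obtain ⟨n, k, rfl⟩ := ihx
      exact ⟨-n, k, by push_cast; ring⟩
  | mul x y hx hy ihx ihy =>
      obtain ⟨n, k, rfl⟩ := ihx
      obtain ⟨m, l, rfl⟩ := ihy
      refine ⟨n * m, k + l, ?_⟩
      push_cast
      rw [div_mul_div_comm, ← pow_add]

lemma div_pow_mem (n : ℤ) (k : ℕ) : ((n : ℚ) / (p : ℚ) ^ k) ∈ Ap p := by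
  have h1 : ((p : ℚ))⁻¹ ∈ Ap p := Subring.subset_closure rfl
  have h2 : ((n : ℚ) / (p : ℚ) ^ k) = (n : ℚ) * ((p : ℚ)⁻¹) ^ k := by
    rw [div_eq_mul_inv, inv_pow]
  rw [h2]
  exact mul_mem (intCast_mem (Ap p) n) (pow_mem h1 k)

lemma q_sq (hp : p.Prime) : (p : ZMod (p ^ 2 - 1)) ^ 2 = 1 := by
  have h1 : (p ^ 2 - 1) + 1 = p ^ 2 := Nat.sub_add_cancel (Nat.one_le_pow _ _ hp.pos)
  have h3 : ((p ^ 2 : ℕ) : ZMod (p ^ 2 - 1)) = 1 := by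
    rw [← h1, Nat.cast_add, Nat.cast_one, ZMod.natCast_self, zero_add]
  rw [← Nat.cast_pow]
  exact h3

lemma rep_eq (hp : p.Prime) {n m : ℤ} {k l : ℕ}
    (h : (n : ℚ) / (p : ℚ) ^ k = (m : ℚ) / (p : ℚ) ^ l) :
    (n : ZMod (p ^ 2 - 1)) * (p : ZMod (p ^ 2 - 1)) ^ k
      = (m : ZMod (p ^ 2 - 1)) * (p : ZMod (p ^ 2 - 1)) ^ l := by
  have hq := q_sq p hp
  set q : ZMod (p ^ 2 - 1) := (p : ZMod (p ^ 2 - 1)) with hqdef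
  have hp0 : (p : ℚ) ≠ 0 := Nat.cast_ne_zero.mpr hp.pos.ne'
  have hcross : n * (p : ℤ) ^ l = m * (p : ℤ) ^ k := by
    have := h
    field_simp at this
    rw [mul_comm m]
    exact_mod_cast this
  have hc2 : (n : ZMod (p ^ 2 - 1)) * q ^ l = (m : ZMod (p ^ 2 - 1)) * q ^ k := by
    have := congrArg (fun z : ℤ => (z : ZMod (p ^ 2 - 1))) hcross
    push_cast at this
    exact this
  calc (n : ZMod (p ^ 2 - 1)) * q ^ k
      = (n : ZMod (p ^ 2 - 1)) * q ^ k * (q ^ 2) ^ l := by rw [hq, one_pow, mul_one]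
    _ = ((n : ZMod (p ^ 2 - 1)) * q ^ l) * (q ^ k * q ^ l) := by ring
    _ = ((m : ZMod (p ^ 2 - 1)) * q ^ k) * (q ^ k * q ^ l) := by rw [hc2]
    _ = (m : ZMod (p ^ 2 - 1)) * q ^ l * (q ^ 2) ^ k := by ring
    _ = (m : ZMod (p ^ 2 - 1)) * q ^ l := by rw [hq, one_pow, mul_one]

variable (hp : p.Prime)

/-- The canonical ring hom `ℤ[1/p] → ℤ/(p²-1)`. -/
noncomputable def phiFun (x : ↥(Ap p)) : ZMod (p ^ 2 - 1) :=
  (((mem_Ap p hp.pos x.2).choose : ℤ) : ZMod (p ^ 2 - 1))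
    * (p : ZMod (p ^ 2 - 1)) ^ (mem_Ap p hp.pos x.2).choose_spec.choose

lemma phiFun_spec {x : ↥(Ap p)} {n : ℤ} {k : ℕ}
    (h : (x : ℚ) = (n : ℚ) / (p : ℚ) ^ k) :
    phiFun p hp x = (n : ZMod (p ^ 2 - 1)) * (p : ZMod (p ^ 2 - 1)) ^ k := by
  have hs := (mem_Ap p hp.pos x.2).choose_spec.choose_spec
  exact rep_eq p hp (hs.symm.trans h)

/-- `φ` as a ring hom. -/
noncomputable def phi : ↥(Ap p) →+* ZMod (p ^ 2 - 1) where
  toFun := phiFun p hp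
  map_one' := by
    rw [phiFun_spec p hp (n := 1) (k := 0) (by norm_num)]
    simp
  map_mul' x y := by
    show phiFun p hp (x * y) = phiFun p hp x * phiFun p hp y
    obtain ⟨n, k, hx⟩ := mem_Ap p hp.pos x.2
    obtain ⟨m, l, hy⟩ := mem_Ap p hp.pos y.2
    have hxy : ((x * y : ↥(Ap p)) : ℚ) = ((n * m : ℤ) : ℚ) / (p : ℚ) ^ (k + l) := by
      push_cast
      rw [hx, hy, div_mul_div_comm, ← pow_add]
    rw [phiFun_spec p hp hxy, phiFun_spec p hp hx, phiFun_spec p hp hy]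
    push_cast
    ring
  map_zero' := by
    show phiFun p hp 0 = 0
    rw [phiFun_spec p hp (n := 0) (k := 0) (by norm_num)]
    simp
  map_add' x y := by
    show phiFun p hp (x + y) = phiFun p hp x + phiFun p hp y
    obtain ⟨n, k, hx⟩ := mem_Ap p hp.pos x.2
    obtain ⟨m, l, hy⟩ := mem_Ap p hp.pos y.2
    have hp0 : (p : ℚ) ≠ 0 := Nat.cast_ne_zero.mpr hp.pos.ne'
    have hxy : ((x + y : ↥(Ap p)) : ℚ)
        = ((n * p ^ l + m * p ^ k : ℤ) : ℚ) / (p : ℚ) ^ (k + l) := by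
      push_cast
      rw [hx, hy, div_add_div _ _ (pow_ne_zero k hp0) (pow_ne_zero l hp0), ← pow_add]
      congr 1
      ring
    rw [phiFun_spec p hp hxy, phiFun_spec p hp hx, phiFun_spec p hp hy]
    have hq := q_sq p hp
    push_cast
    calc ((n : ZMod (p ^ 2 - 1)) * (p : ZMod (p ^ 2 - 1)) ^ l
            + (m : ZMod (p ^ 2 - 1)) * (p : ZMod (p ^ 2 - 1)) ^ k)
          * (p : ZMod (p ^ 2 - 1)) ^ (k + l)
        = (n : ZMod (p ^ 2 - 1)) * (p : ZMod (p ^ 2 - 1)) ^ k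
              * ((p : ZMod (p ^ 2 - 1)) ^ 2) ^ l
            + (m : ZMod (p ^ 2 - 1)) * (p : ZMod (p ^ 2 - 1)) ^ l
              * ((p : ZMod (p ^ 2 - 1)) ^ 2) ^ k := by ring
      _ = _ := by rw [hq]; ring

lemma phi_int (m : ℤ) : phi p hp ((m : ℤ) : ↥(Ap p)) = (m : ZMod (p ^ 2 - 1)) := by
  have h : (((m : ℤ) : ↥(Ap p)) : ℚ) = (m : ℚ) / (p : ℚ) ^ 0 := by push_cast; simp
  rw [show phi p hp ((m : ℤ) : ↥(Ap p)) = phiFun p hp _ from rfl, phiFun_spec p hp h]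
  simp

lemma phi_sq_one {a b : ↥(Ap p)} (hab : a * b = 1) : phi p hp a ^ 2 = 1 := by
  obtain ⟨n, k, ha⟩ := mem_Ap p hp.pos a.2
  obtain ⟨m, l, hb⟩ := mem_Ap p hp.pos b.2
  have hp0 : (p : ℚ) ≠ 0 := Nat.cast_ne_zero.mpr hp.pos.ne'
  have hq := q_sq p hp
  have hab' : (n : ℚ) / (p : ℚ) ^ k * ((m : ℚ) / (p : ℚ) ^ l) = 1 := by
    rw [← ha, ← hb]
    exact_mod_cast congrArg (fun z : ↥(Ap p) => (z : ℚ)) hab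
  have hnm : n * m = (p : ℤ) ^ (k + l) := by
    field_simp at hab'
    rw [pow_add]
    exact_mod_cast hab'
  have hdvd : n.natAbs ∣ p ^ (k + l) := by
    have h5 : n ∣ (p : ℤ) ^ (k + l) := ⟨m, hnm.symm⟩
    have h6 : n.natAbs ∣ ((p : ℤ) ^ (k + l)).natAbs := Int.natAbs_dvd_natAbs.mpr h5
    rwa [Int.natAbs_pow, Int.natAbs_natCast] at h6
  obtain ⟨s, hs, hns⟩ := (Nat.dvd_prime_pow hp).mp hdvd
  have hn2 : n ^ 2 = (p : ℤ) ^ (2 * s) := by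
    have h7 : (n.natAbs : ℤ) = (p : ℤ) ^ s := by exact_mod_cast hns
    have h8 : (n.natAbs : ℤ) * n.natAbs = n * n := Int.natAbs_mul_self' n
    calc n ^ 2 = n * n := sq n
      _ = (n.natAbs : ℤ) * n.natAbs := h8.symm
      _ = (p : ℤ) ^ s * (p : ℤ) ^ s := by rw [h7]
      _ = (p : ℤ) ^ (2 * s) := by rw [← pow_add]; congr 1; omega
  have ha2 : ((a ^ 2 : ↥(Ap p)) : ℚ) = ((n ^ 2 : ℤ) : ℚ) / (p : ℚ) ^ (2 * k) := by
    push_cast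
    rw [ha, div_pow, ← pow_mul, mul_comm k 2]
  have := phiFun_spec p hp ha2
  rw [show phi p hp a ^ 2 = phi p hp (a ^ 2) from (map_pow _ _ _).symm]
  rw [show phi p hp (a ^ 2) = phiFun p hp (a ^ 2) from rfl, this, hn2]
  push_cast
  rw [show ((p:ZMod (p^2-1)))^(2*s) * ((p:ZMod (p^2-1)))^(2*k) = ((p:ZMod (p^2-1))^2)^(s+k) by ring, hq, one_pow]

lemma phi_ker {x : ↥(Ap p)} (h : phi p hp x = 0) :
    ∃ y : ↥(Ap p), x = ((p ^ 2 - 1 : ℕ) : ↥(Ap p)) * y := by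
  obtain ⟨n, k, hx⟩ := mem_Ap p hp.pos x.2
  have hq := q_sq p hp
  have h1 : phi p hp x = (n : ZMod (p ^ 2 - 1)) * (p : ZMod (p ^ 2 - 1)) ^ k :=
    phiFun_spec p hp hx
  have h2 : (n : ZMod (p ^ 2 - 1)) = 0 := by
    have h3 := congrArg (fun z => z * (p : ZMod (p ^ 2 - 1)) ^ k) (h1.symm.trans h)
    simp only [zero_mul] at h3
    calc (n : ZMod (p ^ 2 - 1))
        = (n : ZMod (p ^ 2 - 1)) * ((p : ZMod (p ^ 2 - 1)) ^ 2) ^ k := by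
          rw [hq, one_pow, mul_one]
      _ = (n : ZMod (p ^ 2 - 1)) * (p : ZMod (p ^ 2 - 1)) ^ k
            * (p : ZMod (p ^ 2 - 1)) ^ k := by ring
      _ = 0 := h3
  have h4 : ((p ^ 2 - 1 : ℕ) : ℤ) ∣ n := by
    haveI : NeZero (p ^ 2 - 1) := ⟨by
      have := Nat.pow_le_pow_left hp.two_le 2
      omega⟩
    rwa [ZMod.intCast_zmod_eq_zero_iff_dvd] at h2
  obtain ⟨m, hm⟩ := h4
  refine ⟨⟨(m : ℚ) / (p : ℚ) ^ k, div_pow_mem p m k⟩, ?_⟩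
  apply Subtype.ext
  push_cast
  rw [hx, hm]
  push_cast
  ring

end RingPart

section GroupPart

set_option synthInstance.maxHeartbeats 1000000
set_option maxHeartbeats 1000000

open SL2Aux

variable (p : ℕ) (hp : p.Prime)



/-- entries of an upper triangular matrix -/
abbrev bm (b : ↥(Bsub ↥(Ap p))) : Matrix (Fin 2) (Fin 2) ↥(Ap p) := ((b : SL2 ↥(Ap p)) : Matrix (Fin 2) (Fin 2) ↥(Ap p))

lemma b10 (b : ↥(Bsub ↥(Ap p))) : bm p b 1 0 = 0 := b.2

lemma b_det (b : ↥(Bsub ↥(Ap p))) : bm p b 0 0 * bm p b 1 1 = 1 := by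
  have h := Matrix.SpecialLinearGroup.det_coe (b : SL2 ↥(Ap p))
  rw [Matrix.det_fin_two] at h
  rw [show ((b : SL2 ↥(Ap p)) : Matrix (Fin 2) (Fin 2) ↥(Ap p)) 1 0 = 0 from b.2,
    mul_zero, sub_zero] at h
  exact h

lemma bm_mul (b c : ↥(Bsub ↥(Ap p))) :
    bm p (b * c) = bm p b * bm p c := by
  rfl

lemma mul_e00 (b c : ↥(Bsub ↥(Ap p))) : bm p (b * c) 0 0 = bm p b 0 0 * bm p c 0 0 := by
  rw [bm_mul, Matrix.mul_apply, Fin.sum_univ_two]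
  rw [show bm p c 1 0 = 0 from c.2, mul_zero, add_zero]

lemma mul_e01 (b c : ↥(Bsub ↥(Ap p))) :
    bm p (b * c) 0 1 = bm p b 0 0 * bm p c 0 1 + bm p b 0 1 * bm p c 1 1 := by
  rw [bm_mul, Matrix.mul_apply, Fin.sum_univ_two]

lemma mul_e11 (b c : ↥(Bsub ↥(Ap p))) : bm p (b * c) 1 1 = bm p b 1 1 * bm p c 1 1 := by
  rw [bm_mul, Matrix.mul_apply, Fin.sum_univ_two]
  rw [show bm p b 1 0 = 0 from b.2, zero_mul, zero_add]

/-- diagonal part as a unit -/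
def du (b : ↥(Bsub ↥(Ap p))) : (↥(Ap p))ˣ :=
  ⟨bm p b 0 0, bm p b 1 1, b_det p b, by rw [mul_comm]; exact b_det p b⟩

/-- projection `B → T` killing the off-diagonal entry -/
def piT : ↥(Bsub ↥(Ap p)) →* ↥(Tsub ↥(Ap p)) :=
  MonoidHom.mk' (fun b => ⟨dMat (du p b), dMat_mem_T _⟩) (by
    intro b c
    apply Subtype.ext
    have h : du p (b * c) = du p b * du p c := Units.ext (mul_e00 p b c)
    show dMat (du p (b * c)) = dMat (du p b) * dMat (du p c)
    rw [h, dMat_mul])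

/-- unipotent element -/
def uB (y : ↥(Ap p)) : ↥(Bsub ↥(Ap p)) :=
  ⟨⟨!![1, y; 0, 1], by simp [Matrix.det_fin_two_of]⟩, by
    show (!![1, y; 0, 1] : Matrix (Fin 2) (Fin 2) ↥(Ap p)) 1 0 = 0
    simp⟩

lemma uB_add (y z : ↥(Ap p)) : uB p (y + z) = uB p y * uB p z := by
  apply Subtype.ext
  ext i j
  rw [Subgroup.coe_mul, Matrix.SpecialLinearGroup.coe_mul]
  fin_cases i <;> fin_cases j <;>
    (simp [uB, Matrix.SpecialLinearGroup.coe_mul, Matrix.mul_apply, Fin.sum_univ_two] <;>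
      try ring)

/-- `uB` as a monoid hom from `Multiplicative ↥(Ap p)`. -/
def uHom : Multiplicative ↥(Ap p) →* ↥(Bsub ↥(Ap p)) :=
  MonoidHom.mk' (fun y => uB p y.toAdd) (by
    intro a b
    exact uB_add p a.toAdd b.toAdd)

lemma uB_zpow (m : ℤ) : uB p (1 : ↥(Ap p)) ^ m = uB p ((m : ℤ) • (1 : ↥(Ap p))) := by
  have h : uB p (1 : ↥(Ap p)) = uHom p (Multiplicative.ofAdd (1 : ↥(Ap p))) := rfl
  rw [h, ← map_zpow, ← ofAdd_zsmul]
  rfl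

lemma dMat_mem_B (a : (↥(Ap p))ˣ) : dMat a ∈ Bsub ↥(Ap p) := T_le_B _ (dMat_mem_T a)

lemma d_u_rel (a : (↥(Ap p))ˣ) (y : ↥(Ap p)) :
    (⟨dMat a, dMat_mem_B p a⟩ : ↥(Bsub ↥(Ap p))) * uB p y
      = uB p ((a : ↥(Ap p)) ^ 2 * y) * ⟨dMat a, dMat_mem_B p a⟩ := by
  apply Subtype.ext
  ext i j
  simp only [Subgroup.coe_mul, Matrix.SpecialLinearGroup.coe_mul]
  fin_cases i <;> fin_cases j <;>
    simp [uB, dMat, Matrix.SpecialLinearGroup.coe_mul, Matrix.mul_apply,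
      Fin.sum_univ_two]
  · -- entry 0 1 : a * y = a^2 * y * a⁻¹
    have h : ((a : ↥(Ap p)) : ℚ) * (((a⁻¹ : (↥(Ap p))ˣ) : ↥(Ap p)) : ℚ) = 1 := by
      exact_mod_cast congrArg (fun z : ↥(Ap p) => (z : ℚ)) a.mul_inv
    linear_combination (-(((a : ↥(Ap p)) : ℚ)) * ((y : ↥(Ap p)) : ℚ)) * h

lemma of_uB_a2 (a : (↥(Ap p))ˣ) (y : ↥(Ap p)) :
    Abelianization.of (uB p ((a : ↥(Ap p)) ^ 2 * y)) = Abelianization.of (uB p y) := by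
  have h := congrArg Abelianization.of (d_u_rel p a y)
  rw [map_mul, map_mul,
    mul_comm (Abelianization.of (uB p ((a : ↥(Ap p)) ^ 2 * y)))] at h
  exact (mul_left_cancel h).symm

/-- `p` as a unit of `ℤ[1/p]`. -/
def pUnit : (↥(Ap p))ˣ := by
  refine ⟨((p : ℕ) : ↥(Ap p)), ⟨((p : ℚ))⁻¹, Subring.subset_closure rfl⟩, ?_, ?_⟩ <;>
  · apply Subtype.ext
    push_cast
    have hp0 : (p : ℚ) ≠ 0 := Nat.cast_ne_zero.mpr hp.pos.ne'
    field_simp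

lemma pUnit_val : ((pUnit p hp : (↥(Ap p))ˣ) : ↥(Ap p)) = ((p : ℕ) : ↥(Ap p)) := rfl

include hp in
lemma Ncast : ((p ^ 2 - 1 : ℕ) : ↥(Ap p)) = ((p : ℕ) : ↥(Ap p)) ^ 2 - 1 := by
  have h1 : 1 ≤ p ^ 2 := Nat.one_le_pow _ _ hp.pos
  push_cast [Nat.cast_sub h1]
  ring

include hp in
lemma of_uB_N (y : ↥(Ap p)) :
    Abelianization.of (uB p (((p ^ 2 - 1 : ℕ) : ↥(Ap p)) * y)) = 1 := by
  have e1 : ((pUnit p hp : (↥(Ap p))ˣ) : ↥(Ap p)) ^ 2 * y = ((p ^ 2 - 1 : ℕ) : ↥(Ap p)) * y + y := by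
    rw [pUnit_val, Ncast p hp]
    ring
  have e2 := of_uB_a2 p (pUnit p hp) y
  rw [e1, uB_add, map_mul] at e2
  nth_rewrite 2 [← one_mul (Abelianization.of (uB p y))] at e2
  exact mul_right_cancel e2

/-- the `ZMod (p²-1)` part of the inverse map, additively -/
noncomputable def psi2add : ZMod (p ^ 2 - 1) →+ Additive (Abelianization ↥(Bsub ↥(Ap p))) :=
  ZMod.lift _ ⟨zmultiplesHom _ (Additive.ofMul (Abelianization.of (uB p (1 : ↥(Ap p))))), by
    show ((p ^ 2 - 1 : ℕ) : ℤ) • Additive.ofMul (Abelianization.of (uB p (1 : ↥(Ap p)))) = 0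
    have h1 := uB_zpow p ((p ^ 2 - 1 : ℕ) : ℤ)
    have h2 : (((p ^ 2 - 1 : ℕ) : ℤ)) • (1 : ↥(Ap p)) = ((p ^ 2 - 1 : ℕ) : ↥(Ap p)) * 1 := by
      rw [zsmul_eq_mul]
      push_cast
      ring
    have h3 : Abelianization.of (uB p (1 : ↥(Ap p))) ^ (((p ^ 2 - 1 : ℕ) : ℤ))
        = (1 : Abelianization ↥(Bsub ↥(Ap p))) := by
      rw [← map_zpow, h1, h2, of_uB_N p hp]
    show Additive.ofMul (Abelianization.of (uB p (1 : ↥(Ap p))) ^ (((p ^ 2 - 1 : ℕ) : ℤ))) = 0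
    rw [h3]
    rfl⟩

lemma psi2add_int (m : ℤ) :
    (psi2add p hp ((m : ℤ) : ZMod (p ^ 2 - 1))).toMul
      = Abelianization.of (uB p ((m : ℤ) : ↥(Ap p))) := by
  rw [psi2add, ZMod.lift_coe]
  show (((m : ℤ) • Additive.ofMul (Abelianization.of (uB p (1 : ↥(Ap p)))))).toMul = _
  have h1 : (((m : ℤ) • Additive.ofMul (Abelianization.of (uB p (1 : ↥(Ap p)))))).toMul
      = Abelianization.of (uB p (1 : ↥(Ap p))) ^ (m : ℤ) := rfl
  rw [h1, ← map_zpow, uB_zpow]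
  congr 1
  rw [zsmul_eq_mul, mul_one]

/-- Key: `psi2add ∘ φ = of ∘ uB`. -/
lemma psi2add_phi (y : ↥(Ap p)) :
    (psi2add p hp (phi p hp y)).toMul = Abelianization.of (uB p y) := by
  obtain ⟨n, k, hy⟩ := mem_Ap p hp.pos y.2
  have hp0 : (p : ℚ) ≠ 0 := Nat.cast_ne_zero.mpr hp.pos.ne'
  -- p^{2k} * y = n * p^k as elements of ↥(Ap p)
  have e1 : ((p : ℕ) : ↥(Ap p)) ^ (2 * k) * y = (((n * p ^ k : ℤ)) : ↥(Ap p)) := by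
    apply Subtype.ext
    push_cast
    rw [hy]
    field_simp
    ring
  -- of (uB y) = of (uB (n p^k))
  have e2 : Abelianization.of (uB p y) = Abelianization.of (uB p (((n * p ^ k : ℤ)) : ↥(Ap p))) := by
    have h := of_uB_a2 p (pUnit p hp ^ k) y
    have hval : ((pUnit p hp ^ k : (↥(Ap p))ˣ) : ↥(Ap p)) ^ 2 = ((p : ℕ) : ↥(Ap p)) ^ (2 * k) := by
      rw [Units.val_pow_eq_pow_val, pUnit_val, ← pow_mul, mul_comm k 2]
    rw [hval, e1] at h
    exact h.symm
  -- phi y = (n * p^k : ℤ) in ZMod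
  have e3 : phi p hp y = (((n * p ^ k : ℤ)) : ZMod (p ^ 2 - 1)) := by
    have h1 : phi p hp y = (n : ZMod (p ^ 2 - 1)) * (p : ZMod (p ^ 2 - 1)) ^ k :=
      phiFun_spec p hp hy
    rw [h1]
    push_cast
    ring
  rw [e3, psi2add_int, ← e2]

end GroupPart

section FinalPart

set_option synthInstance.maxHeartbeats 1000000
set_option maxHeartbeats 1000000

open SL2Aux

variable (p : ℕ) (hp : p.Prime)

/-- inclusion of the torus into the Borel -/
def inclTB : ↥(Tsub ↥(Ap p)) →* ↥(Bsub ↥(Ap p)) := Subgroup.inclusion (T_le_B _)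

include hp in
lemma wmul (b c : ↥(Bsub ↥(Ap p))) :
    phi p hp (bm p (b * c) 1 1 * bm p (b * c) 0 1)
      = phi p hp (bm p b 1 1 * bm p b 0 1) + phi p hp (bm p c 1 1 * bm p c 0 1) := by
  have hsq : phi p hp (bm p c 1 1) ^ 2 = 1 :=
    phi_sq_one p hp (show bm p c 1 1 * bm p c 0 0 = 1 by rw [mul_comm]; exact b_det p c)
  have hdet : phi p hp (bm p b 0 0 * bm p b 1 1) = 1 := by rw [b_det, map_one]
  have e : bm p (b * c) 1 1 * bm p (b * c) 0 1
      = (bm p b 0 0 * bm p b 1 1) * (bm p c 1 1 * bm p c 0 1)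
        + (bm p c 1 1 * bm p c 1 1) * (bm p b 1 1 * bm p b 0 1) := by
    rw [mul_e11, mul_e01]
    ring
  have h2 : phi p hp (bm p c 1 1 * bm p c 1 1) = 1 := by
    rw [map_mul, ← sq]
    exact hsq
  rw [e, map_add,
    map_mul (phi p hp) (bm p b 0 0 * bm p b 1 1) (bm p c 1 1 * bm p c 0 1),
    hdet, one_mul,
    map_mul (phi p hp) (bm p c 1 1 * bm p c 1 1) (bm p b 1 1 * bm p b 0 1),
    h2, one_mul, add_comm]

/-- the homomorphism `B → Ab(T) × ZMod (p²-1)` -/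
noncomputable def fB : ↥(Bsub ↥(Ap p))
    →* Abelianization ↥(Tsub ↥(Ap p)) × Multiplicative (ZMod (p ^ 2 - 1)) :=
  MonoidHom.mk' (fun b => (Abelianization.of (piT p b),
      Multiplicative.ofAdd (phi p hp (bm p b 1 1 * bm p b 0 1)))) (by
    intro b c
    refine Prod.ext ?_ ?_
    · show Abelianization.of (piT p (b * c)) = _
      rw [map_mul, map_mul]
      rfl
    · show Multiplicative.ofAdd (phi p hp _) = _
      rw [wmul p hp b c, ofAdd_add]
      rfl)

/-- the `ZMod` piece of the inverse -/
noncomputable def psi2 : Multiplicative (ZMod (p ^ 2 - 1))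
    →* Abelianization ↥(Bsub ↥(Ap p)) :=
  MonoidHom.mk' (fun z => (psi2add p hp z.toAdd).toMul) (by
    intro a b
    show (psi2add p hp (a.toAdd + b.toAdd)).toMul = _
    rw [map_add]
    rfl)

/-- the inverse homomorphism -/
noncomputable def PsiBT : Abelianization ↥(Tsub ↥(Ap p)) × Multiplicative (ZMod (p ^ 2 - 1))
    →* Abelianization ↥(Bsub ↥(Ap p)) :=
  (Abelianization.map (inclTB p)).coprod (psi2 p hp)

/-- the forward homomorphism on abelianizations -/
noncomputable def FB : Abelianization ↥(Bsub ↥(Ap p))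
    →* Abelianization ↥(Tsub ↥(Ap p)) × Multiplicative (ZMod (p ^ 2 - 1)) :=
  Abelianization.lift (fB p hp)

lemma decomp (b : ↥(Bsub ↥(Ap p))) :
    inclTB p (piT p b) * uB p (bm p b 1 1 * bm p b 0 1) = b := by
  have hdet : ((bm p b 0 0 : ↥(Ap p)) : ℚ) * ((bm p b 1 1 : ↥(Ap p)) : ℚ) = 1 := by
    exact_mod_cast congrArg (fun z : ↥(Ap p) => (z : ℚ)) (b_det p b)
  have h10 : ((bm p b 1 0 : ↥(Ap p)) : ℚ) = 0 := by
    exact_mod_cast congrArg (fun z : ↥(Ap p) => (z : ℚ)) (b10 p b)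
  apply Subtype.ext
  ext i j
  rw [Subgroup.coe_mul, Matrix.SpecialLinearGroup.coe_mul]
  fin_cases i <;> fin_cases j <;>
    simp [inclTB, piT, dMat, uB, du, Matrix.SpecialLinearGroup.coe_mul,
      Matrix.mul_apply, Fin.sum_univ_two]
  · linear_combination ((bm p b 0 1 : ↥(Ap p)) : ℚ) * hdet
  · exact h10.symm

include hp in
lemma PsiBT_fB (b : ↥(Bsub ↥(Ap p))) :
    PsiBT p hp (fB p hp b) = Abelianization.of b := by
  show Abelianization.map (inclTB p) (Abelianization.of (piT p b))
      * psi2 p hp (Multiplicative.ofAdd (phi p hp (bm p b 1 1 * bm p b 0 1)))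
    = Abelianization.of b
  rw [Abelianization.map_of]
  have hK : psi2 p hp (Multiplicative.ofAdd (phi p hp (bm p b 1 1 * bm p b 0 1)))
      = Abelianization.of (uB p (bm p b 1 1 * bm p b 0 1)) :=
    psi2add_phi p hp _
  rw [hK, ← map_mul, decomp]

lemma piT_incl (t : ↥(Tsub ↥(Ap p))) : piT p (inclTB p t) = t := by
  have h01 : (((t : SL2 ↥(Ap p)) : Matrix (Fin 2) (Fin 2) ↥(Ap p)) 0 1 : ℚ) = 0 := by
    exact_mod_cast congrArg (fun z : ↥(Ap p) => (z : ℚ)) t.2.1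
  have h10 : (((t : SL2 ↥(Ap p)) : Matrix (Fin 2) (Fin 2) ↥(Ap p)) 1 0 : ℚ) = 0 := by
    exact_mod_cast congrArg (fun z : ↥(Ap p) => (z : ℚ)) t.2.2
  apply Subtype.ext
  show dMat (du p (inclTB p t)) = (t : SL2 ↥(Ap p))
  ext i j
  fin_cases i <;> fin_cases j <;>
    simp [inclTB, dMat, du]
  all_goals first
    | rfl
    | exact h01.symm
    | exact h10.symm

include hp in
lemma fB_incl (t : ↥(Tsub ↥(Ap p))) :
    fB p hp (inclTB p t) = (Abelianization.of t, 1) := by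
  have h01 : bm p (inclTB p t) 0 1 = 0 := t.2.1
  show (Abelianization.of (piT p (inclTB p t)),
      Multiplicative.ofAdd (phi p hp (bm p (inclTB p t) 1 1 * bm p (inclTB p t) 0 1))) = _
  rw [piT_incl, h01, mul_zero, map_zero]
  rfl

lemma piT_uB (y : ↥(Ap p)) : piT p (uB p y) = 1 := by
  apply Subtype.ext
  show dMat (du p (uB p y)) = (1 : SL2 ↥(Ap p))
  ext i j
  fin_cases i <;> fin_cases j <;>
    simp [dMat, du, uB]
  all_goals simp [bm, uB]

include hp in
lemma fB_uB (y : ↥(Ap p)) :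
    fB p hp (uB p y) = (1, Multiplicative.ofAdd (phi p hp y)) := by
  show (Abelianization.of (piT p (uB p y)),
      Multiplicative.ofAdd (phi p hp (bm p (uB p y) 1 1 * bm p (uB p y) 0 1))) = _
  have e : bm p (uB p y) 1 1 * bm p (uB p y) 0 1 = y := by
    show (1 : ↥(Ap p)) * y = y
    rw [one_mul]
  rw [piT_uB, map_one, e]

lemma FB_of (b : ↥(Bsub ↥(Ap p))) :
    FB p hp (Abelianization.of b) = fB p hp b :=
  Abelianization.lift_apply_of _ _

include hp in
lemma PsiBT_FB (x : Abelianization ↥(Bsub ↥(Ap p))) :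
    PsiBT p hp (FB p hp x) = x := by
  obtain ⟨b, hb⟩ := of_surj x
  have hb' : Abelianization.of b = x := hb
  rw [← hb', FB_of, PsiBT_fB]

include hp in
lemma FB_PsiBT (y : Abelianization ↥(Tsub ↥(Ap p)) × Multiplicative (ZMod (p ^ 2 - 1))) :
    FB p hp (PsiBT p hp y) = y := by
  obtain ⟨t, z⟩ := y
  obtain ⟨τ, ht⟩ := of_surj t
  obtain ⟨m, hz⟩ := ZMod.intCast_surjective z.toAdd
  have ht' : Abelianization.of τ = t := ht
  have hz' : z = Multiplicative.ofAdd ((m : ℤ) : ZMod (p ^ 2 - 1)) := by rw [hz]; rfl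
  have hPsi : PsiBT p hp (t, z)
      = Abelianization.of (inclTB p τ)
        * Abelianization.of (uB p ((m : ℤ) : ↥(Ap p))) := by
    show Abelianization.map (inclTB p) t * psi2 p hp z = _
    rw [← ht', Abelianization.map_of, hz']
    congr 1
    show (psi2add p hp ((m : ℤ) : ZMod (p ^ 2 - 1))).toMul = _
    exact psi2add_int p hp m
  rw [hPsi, map_mul, FB_of, FB_of, fB_incl p hp τ, fB_uB p hp, phi_int p hp m,
    Prod.mk_mul_mk, mul_one, one_mul, ht', ← hz']

/-- Abelianization of the Borel splits. -/
noncomputable def eAb : Abelianization ↥(Bsub ↥(Ap p))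
    ≃* Abelianization ↥(Tsub ↥(Ap p)) × Multiplicative (ZMod (p ^ 2 - 1)) where
  toFun := FB p hp
  invFun := PsiBT p hp
  left_inv := PsiBT_FB p hp
  right_inv := FB_PsiBT p hp
  map_mul' := (FB p hp).map_mul

/-- the additive version -/
noncomputable def e2 : Additive (Abelianization ↥(Bsub ↥(Ap p)))
    ≃+ Additive (Abelianization ↥(Tsub ↥(Ap p))) × ZMod (p ^ 2 - 1) where
  toFun x := (Additive.ofMul (eAb p hp x.toMul).1, (eAb p hp x.toMul).2.toAdd)
  invFun y := Additive.ofMul ((eAb p hp).symm (y.1.toMul, Multiplicative.ofAdd y.2))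
  left_inv x := by
    show Additive.ofMul ((eAb p hp).symm ((eAb p hp x.toMul).1, (eAb p hp x.toMul).2)) = x
    rw [Prod.mk.eta, MulEquiv.symm_apply_apply]
    rfl
  right_inv y := by
    show (Additive.ofMul ((eAb p hp) ((eAb p hp).symm (y.1.toMul, Multiplicative.ofAdd y.2))).1,
        ((eAb p hp) ((eAb p hp).symm (y.1.toMul, Multiplicative.ofAdd y.2))).2.toAdd) = y
    rw [MulEquiv.apply_symm_apply]
    rfl
  map_add' x y := by
    have h : (x + y).toMul = x.toMul * y.toMul := rfl
    show (Additive.ofMul (eAb p hp ((x + y).toMul)).1,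
        (eAb p hp ((x + y).toMul)).2.toAdd) = _
    rw [h, map_mul]
    rfl

end FinalPart

end

end Statement8Aux

open GroupHomology SL2Aux in
/-- Let `p` be a prime number and `A_p = ℤ[1/p]`.  Then
`H₁(B(A_p), ℤ) ≅ H₁(T(A_p), ℤ) ⊕ ℤ/(p² − 1)`. -/
theorem statement_8 (p : ℕ) (hp : p.Prime) :
    Nonempty (H (triv ↥(Bsub ↥(Ap p)) ℤ) 1 ≃+
      H (triv ↥(Tsub ↥(Ap p)) ℤ) 1 × ZMod (p ^ 2 - 1)) := by
  exact ⟨(Statement8Aux.h1Iso _).trans ((Statement8Aux.e2 p hp).trans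
    (AddEquiv.prodCongr (Statement8Aux.h1Iso _).symm (AddEquiv.refl _)))⟩
end
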